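/- arXiv:2412.18071 — 4 statements merged into one kernel-verified Lean document; each statement's English description precedes it below -/
import Mathlib

section
/- Suppose I_{−k} = ∅ for all k ≥ n. Then for almost every (x_i)_{i∈I} ∈ (ℝ^n)^I the following holds: for every k, all i_0, …, i_k ∈ I, and every tuple (m_1, …, m_k) ∈ E_{i_1 i_0} × ⋯ × E_{i_k i_{k−1}}, the k+1 points y_0 = x_{i_0}, y_ℓ = x_{i_ℓ}+m_1+⋯+m_ℓ (1 ≤ ℓ ≤ k) are affinely independent, and for every nonzero m ∈ ℤ^n the relative (intrinsic) interior of convexHull{y_0, …, y_k} is disjoint from its translate by m; equivalently, π restricts to an injection on this relative interior. In other words, X(F^•) is immersed. -/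
open scoped BigOperators
open MeasureTheory

noncomputable section

/-- `ℤ^n`, the exponent lattice. -/
abbrev Zn (n : ℕ) : Type := Fin n → ℤ

/-- `ℝ^n`. -/
abbrev Rn (n : ℕ) : Type := Fin n → ℝ

/-- The Laurent polynomial ring `R_n = ℂ[z_1^{±1},…,z_n^{±1}]`, realized as the group
algebra of `ℤ^n` over `ℂ`. -/
abbrev LaurentRing (n : ℕ) : Type := AddMonoidAlgebra ℂ (Zn n)

/-- The embedding `ℤ^n → ℝ^n`. -/
def zToR {n : ℕ} (m : Zn n) : Rn n := fun j => (m j : ℝ)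

/-- A bounded based sequence `F^•` of finite-rank free `R_n`-modules: a finite index set
`I = ⊔_k I_k` (with `I_k = ∅` for `k > 0` and `I_0 ≠ ∅`), recorded via a degree function,
together with the matrix entries `d^k_{ij} ∈ R_n` of the maps `F^k → F^{k+1}`. -/
structure BasedSeq (n : ℕ) where
  I : Type
  fintypeI : Fintype I
  deg : I → ℤ
  deg_nonpos : ∀ i, deg i ≤ 0
  exists_deg_zero : ∃ i, deg i = 0
  d : I → I → LaurentRing n
  d_eq_zero : ∀ i j, deg i ≠ deg j + 1 → d i j = 0

attribute [instance] BasedSeq.fintypeI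

/-- Chains witnessing membership in `E_{ij}`: `EChain F i j m` holds iff there is a chain
`j = i_0, i_1, …, i_k = i` with `deg i_ℓ = deg i_{ℓ-1} + 1` at each step, exponents
`m_ℓ` in the support of the corresponding matrix entry, and `m = m_1 + ⋯ + m_k`. -/
inductive EChain {n : ℕ} (F : BasedSeq n) : F.I → F.I → Zn n → Prop where
  | base {i j : F.I} {m : Zn n} :
      F.deg i = F.deg j + 1 → m ∈ (F.d i j).coeff.support → EChain F i j m
  | step {i j k : F.I} {m m' : Zn n} :
      EChain F j k m → F.deg i = F.deg j + 1 → m' ∈ (F.d i j).coeff.support →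
      EChain F i k (m + m')

/-- The subset `E_{ij} ⊆ ℤ^n`. -/
def Eset {n : ℕ} (F : BasedSeq n) (i j : F.I) : Set (Zn n) := {m | EChain F i j m}

/-- The condition `(m_1, …, m_k) ∈ E_{i_1 i_0} × ⋯ × E_{i_k i_{k-1}}`. -/
def goodTuple {n : ℕ} (F : BasedSeq n) {k : ℕ} (c : Fin (k + 1) → F.I)
    (m : Fin k → Zn n) : Prop :=
  ∀ ℓ : Fin k, m ℓ ∈ Eset F (c ℓ.succ) (c ℓ.castSucc)

/-- The vertex tuple `(x_{i_0}, x_{i_1}+m_1, …, x_{i_k}+m_1+⋯+m_k)` in `ℝ^n`. -/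
def vtx {n : ℕ} (F : BasedSeq n) (x : F.I → Rn n) {k : ℕ}
    (c : Fin (k + 1) → F.I) (m : Fin k → Zn n) : Fin (k + 1) → Rn n :=
  fun a => x (c a) + zToR (∑ ℓ ∈ Finset.univ.filter (fun ℓ : Fin k => (ℓ : ℕ) < (a : ℕ)), m ℓ)

/-- Membership in `X(F^•)_k`: the tuple `y` represents (mod a common `ℤ^n`-translation `t`)
one of the linear `k`-simplices `[x_{i_0}, x_{i_1}+m_1, …, x_{i_k}+m_1+⋯+m_k] mod ℤ^n`. -/
def InX {n : ℕ} (F : BasedSeq n) (x : F.I → Rn n) (k : ℕ)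
    (y : Fin (k + 1) → Rn n) : Prop :=
  ∃ (c : Fin (k + 1) → F.I) (m : Fin k → Zn n) (t : Zn n),
    goodTuple F c m ∧ ∀ a, y a = vtx F x c m a + zToR t

/-- The integer lattice `ℤ^n ⊆ ℝ^n` as an additive subgroup. -/
def intLattice (n : ℕ) : AddSubgroup (Rn n) :=
  AddSubgroup.pi Set.univ fun _ => AddSubgroup.zmultiples (1 : ℝ)

/-- The torus `T^n = ℝ^n/ℤ^n`. -/
abbrev Torus (n : ℕ) := Rn n ⧸ intLattice n

/-- The projection `π : ℝ^n → T^n`. -/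
def toTorus {n : ℕ} : Rn n → Torus n := QuotientAddGroup.mk

/-- The tropical Lagrangian coamoeba `T(F^•) ⊆ T^n`. -/
def TropT {n : ℕ} (F : BasedSeq n) (x : F.I → Rn n) : Set (Torus n) :=
  ⋃ (k : ℕ), ⋃ (c : Fin (k + 1) → F.I), ⋃ (m : Fin k → Zn n), ⋃ (_ : goodTuple F c m),
    toTorus '' convexHull ℝ (Set.range (vtx F x c m))

/-- The subset `S_i ⊆ ℝ^n`. -/
def Sset {n : ℕ} (F : BasedSeq n) (x : F.I → Rn n) (i : F.I) : Set (Rn n) :=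
  ⋃ (k : ℕ), ⋃ (c : Fin (k + 1) → F.I), ⋃ (m : Fin k → Zn n),
    ⋃ (_ : c 0 = i ∧ goodTuple F c m), convexHull ℝ (Set.range (vtx F x c m))

/-- `[x, S] = {t·x + (1−t)·y : y ∈ S, t ∈ [0,1]}`. -/
def joinSet {n : ℕ} (x : Rn n) (S : Set (Rn n)) : Set (Rn n) :=
  {p | ∃ y ∈ S, ∃ t ∈ Set.Icc (0 : ℝ) 1, p = t • x + (1 - t) • y}

/-! Every simplex comes from a chain `i_0, …, i_k` of strictly increasing degree in `(-n, 0]`,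
so the `i_ℓ` are distinct and `k < n`. The edge vectors `y_ℓ - y_0` are then, up to a constant,
the image of the configuration under a surjective linear map, and for almost every family `v` of
`k < n` vectors `(v, t)` is linearly independent, by Fubini: each new vector only has to avoid a
proper subspace, which is Haar-null. Linear independence of `(y_1 - y_0, …, y_k - y_0, t)` makes
the simplex nondegenerate and puts `t` outside its direction, so it cannot meet its translate by
`t`. There are only countably many chains, exponents and translations. -/

open Module

section GenericPosition

variable {E : Type*} [NormedAddCommGroup E] [NormedSpace ℝ E] [FiniteDimensional ℝ E]
  [MeasurableSpace E] [BorelSpace E] (μ : Measure E) [μ.IsAddHaarMeasure]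

lemma ae_notMem_span_range {ι : Type*} [Fintype ι] (v : ι → E)
    (hv : Fintype.card ι < finrank ℝ E) :
    ∀ᵐ a ∂μ, a ∉ Submodule.span ℝ (Set.range v) := by
  refine measure_eq_zero_iff_ae_notMem.1 (Measure.addHaar_submodule μ _ fun htop => hv.not_ge ?_)
  have hrank := finrank_range_le_card (R := ℝ) v
  rwa [Set.finrank, htop, finrank_top] at hrank

lemma ae_linearIndependent_finSnoc {u : E} (hu : u ≠ 0) :
    ∀ {k : ℕ}, k < finrank ℝ E →
      ∀ᵐ z ∂(Measure.pi fun _ : Fin k => μ),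
        LinearIndependent ℝ (Fin.snoc z u : Fin (k + 1) → E)
  | 0, _ => ae_of_all _ fun z =>
      linearIndependent_finSnoc.2 ⟨linearIndependent_empty_type, by simpa using hu⟩
  | k + 1, hk => by
    have hopen : MeasurableSet {p : E × (Fin k → E) |
        LinearIndependent ℝ (Fin.cons p.1 (Fin.snoc p.2 u) : Fin (k + 2) → E)} :=
      (isOpen_setOfPred_linearIndependent.preimage (by fun_prop)).measurableSet
    have hprod : ∀ᵐ p ∂μ.prod (Measure.pi fun _ : Fin k => μ),
        LinearIndependent ℝ (Fin.cons p.1 (Fin.snoc p.2 u) : Fin (k + 2) → E) := by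
      rw [Measure.ae_prod_iff_ae_ae hopen, Measure.ae_ae_comm hopen]
      filter_upwards [ae_linearIndependent_finSnoc hu (k := k) (by omega)] with z hz
      filter_upwards [ae_notMem_span_range μ (Fin.snoc z u) (by simpa using hk)] with a ha
      exact linearIndependent_finCons.2 ⟨hz, ha⟩
    filter_upwards [(measurePreserving_piFinSuccAbove (fun _ => μ) 0).quasiMeasurePreserving.ae
      hprod] with z hz
    simpa [Fin.cons_snoc_eq_snoc_cons] using hz

lemma ae_linearIndependent_finSnoc_sub {ι : Type*} [Fintype ι] {k : ℕ}
    (hk : k < finrank ℝ E) {c : Fin (k + 1) → ι} (hc : c.Injective) (w : Fin (k + 1) → E)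
    {u : E} (hu : u ≠ 0) :
    ∀ᵐ x ∂(Measure.pi fun _ : ι => μ), LinearIndependent ℝ
      (Fin.snoc (fun i : Fin k => (x (c i.succ) + w i.succ) - (x (c 0) + w 0)) u :
        Fin (k + 1) → E) := by
  classical
  let L : (ι → E) →ₗ[ℝ] Fin k → E :=
    LinearMap.pi fun i =>
      LinearMap.proj (R := ℝ) (φ := fun _ : ι => E) (c i.succ) - LinearMap.proj (c 0)
  have hL : Function.Surjective L := fun v =>
    ⟨Function.extend c (Fin.cons 0 v) 0, funext fun i => by simp [L, hc.extend_apply]⟩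
  let w' : Fin k → E := fun i => w i.succ - w 0
  have hopen : MeasurableSet
      {v : Fin k → E | LinearIndependent ℝ (Fin.snoc (v + w') u : Fin (k + 1) → E)} :=
    (isOpen_setOfPred_linearIndependent.preimage (by fun_prop)).measurableSet
  have hgood : ∀ᵐ v ∂(Measure.pi fun _ : Fin k => μ),
      LinearIndependent ℝ (Fin.snoc (v + w') u : Fin (k + 1) → E) :=
    (measurePreserving_add_right _ w').quasiMeasurePreserving.ae
      (ae_linearIndependent_finSnoc μ hu hk)
  filter_upwards [(ae_comp_linearMap_mem_iff L _ _ hL hopen).2 hgood] with x hx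
  convert hx using 3 with i
  simp only [Pi.add_apply, L, w', LinearMap.pi_apply, LinearMap.sub_apply, LinearMap.proj_apply]
  abel

end GenericPosition

section Simplex

variable {𝕜 V P : Type*} [Ring 𝕜] [AddCommGroup V] [Module 𝕜 V] [AddTorsor V P]

lemma affineIndependent_iff_linearIndependent_succ_vsub_zero {m : ℕ} (p : Fin (m + 1) → P) :
    AffineIndependent 𝕜 p ↔ LinearIndependent 𝕜 fun i : Fin m => p i.succ -ᵥ p 0 := by
  rw [affineIndependent_iff_linearIndependent_vsub 𝕜 p 0,
    ← linearIndependent_equiv (finSuccAboveEquiv 0)]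
  simp [Function.comp_def, finSuccAboveEquiv_apply]

lemma vectorSpan_range_eq_span_range_succ_vsub_zero {m : ℕ} (p : Fin (m + 1) → P) :
    vectorSpan 𝕜 (Set.range p) =
      Submodule.span 𝕜 (Set.range fun i : Fin m => p i.succ -ᵥ p 0) := by
  rw [vectorSpan_range_eq_span_range_vsub_right_ne 𝕜 p 0,
    ← (finSuccAboveEquiv (0 : Fin (m + 1))).surjective.range_comp]
  simp [Function.comp_def, finSuccAboveEquiv_apply]

end Simplex

lemma affineIndependent_and_notMem_vectorSpan_of_linearIndependent_finSnoc
    {V : Type*} [AddCommGroup V] [Module ℝ V] {m : ℕ} {p : Fin (m + 1) → V} {u : V}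
    (h : LinearIndependent ℝ (Fin.snoc (fun i : Fin m => p i.succ - p 0) u : Fin (m + 1) → V)) :
    AffineIndependent ℝ p ∧ u ∉ vectorSpan ℝ (Set.range p) := by
  obtain ⟨hp, hu⟩ := linearIndependent_finSnoc.1 h
  rw [affineIndependent_iff_linearIndependent_succ_vsub_zero,
    vectorSpan_range_eq_span_range_succ_vsub_zero]
  exact ⟨hp, hu⟩

lemma disjoint_intrinsicInterior_convexHull_image_add_right {V : Type*} [NormedAddCommGroup V]
    [NormedSpace ℝ V] {s : Set V} {u : V} (hu : u ∉ vectorSpan ℝ s) :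
    Disjoint (intrinsicInterior ℝ (convexHull ℝ s))
      ((· + u) '' intrinsicInterior ℝ (convexHull ℝ s)) := by
  have hspan : vectorSpan ℝ (intrinsicInterior ℝ (convexHull ℝ s)) ≤ vectorSpan ℝ s := by
    rw [← direction_affineSpan ℝ s, ← affineSpan_convexHull, direction_affineSpan]
    exact vectorSpan_mono ℝ intrinsicInterior_subset
  rw [Set.disjoint_left]
  rintro _ hy ⟨y', hy', rfl⟩
  exact hu (hspan (by simpa using vsub_mem_vectorSpan ℝ hy hy'))

section BasedSeq

variable {n : ℕ} {F : BasedSeq n} {k : ℕ} {c : Fin (k + 1) → F.I} {m : Fin k → Zn n}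

lemma EChain.deg_lt {i j : F.I} {m : Zn n} (h : EChain F i j m) : F.deg j < F.deg i := by
  induction h with
  | base => omega
  | step _ _ _ ih => omega

lemma goodTuple.strictMono (h : goodTuple F c m) : StrictMono (F.deg ∘ c) :=
  Fin.strictMono_iff_lt_succ.2 fun i => (h i).deg_lt

lemma goodTuple.lt_of_neg_lt_deg (hshort : ∀ i : F.I, -(n : ℤ) < F.deg i)
    (h : goodTuple F c m) : k < n := by
  have hcard := Fintype.card_le_of_injective
    (fun a => (⟨F.deg (c a), hshort _, F.deg_nonpos _⟩ : Set.Ioc (-(n : ℤ)) 0))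
    fun a b hab => h.strictMono.injective (congrArg Subtype.val hab)
  simpa using hcard

lemma zToR_ne_zero {t : Zn n} (ht : t ≠ 0) : zToR t ≠ 0 :=
  fun h => ht (funext fun j => by simpa [zToR] using congrFun h j)

lemma goodTuple.ae_linearIndependent (hshort : ∀ i : F.I, -(n : ℤ) < F.deg i)
    (h : goodTuple F c m) {t : Zn n} (ht : t ≠ 0) :
    ∀ᵐ x : F.I → Rn n ∂volume, LinearIndependent ℝ
      (Fin.snoc (fun i : Fin k => vtx F x c m i.succ - vtx F x c m 0) (zToR t) :
        Fin (k + 1) → Rn n) :=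
  ae_linearIndependent_finSnoc_sub volume (by simpa using h.lt_of_neg_lt_deg hshort)
    h.strictMono.injective.of_comp
    (fun a => zToR (∑ ℓ ∈ Finset.univ.filter fun ℓ : Fin k => (ℓ : ℕ) < a, m ℓ))
    (zToR_ne_zero ht)

end BasedSeq

/-- if `I_{-k} = ∅` for all `k ≥ n`, then for almost every configuration
`(x_i) ∈ (ℝ^n)^I` every simplex of `X(F^•)` has affinely independent vertices and its
relative interior is disjoint from all of its nonzero `ℤ^n`-translates; i.e. `X(F^•)`
is immersed. -/
theorem stmt1 (n : ℕ) (hn : 1 ≤ n) (F : BasedSeq n)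
    (hshort : ∀ i : F.I, -(n : ℤ) < F.deg i) :
    ∀ᵐ x : F.I → Rn n ∂volume,
      ∀ (k : ℕ) (c : Fin (k + 1) → F.I) (m : Fin k → Zn n), goodTuple F c m →
        AffineIndependent ℝ (vtx F x c m) ∧
        ∀ t : Zn n, t ≠ 0 →
          Disjoint (intrinsicInterior ℝ (convexHull ℝ (Set.range (vtx F x c m))))
            ((fun y => y + zToR t) ''
              intrinsicInterior ℝ (convexHull ℝ (Set.range (vtx F x c m)))) := by
  have key : ∀ᵐ x : F.I → Rn n ∂volume,
      ∀ (k : ℕ) (c : Fin (k + 1) → F.I) (m : Fin k → Zn n) (t : Zn n),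
        goodTuple F c m → t ≠ 0 → LinearIndependent ℝ
          (Fin.snoc (fun i : Fin k => vtx F x c m i.succ - vtx F x c m 0) (zToR t) :
            Fin (k + 1) → Rn n) :=
    ae_all_iff.2 fun k => ae_all_iff.2 fun c => ae_all_iff.2 fun m => ae_all_iff.2 fun t =>
      Filter.eventually_imp_distrib_left.2 fun hg =>
        Filter.eventually_imp_distrib_left.2 fun ht => hg.ae_linearIndependent hshort ht
  have hone : (fun _ => 1 : Zn n) ≠ 0 := fun h => one_ne_zero (congrFun h ⟨0, hn⟩)
  filter_upwards [key] with x hx k c m hg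
  exact ⟨(affineIndependent_and_notMem_vectorSpan_of_linearIndependent_finSnoc
      (hx k c m _ hg hone)).1, fun t ht => disjoint_intrinsicInterior_convexHull_image_add_right
      (affineIndependent_and_notMem_vectorSpan_of_linearIndependent_finSnoc (hx k c m t hg ht)).2⟩
end
end

section
/- For almost every (x_i)_{i∈I} ∈ (ℝ^n)^I the following holds. Let k < n, let i_0, …, i_k ∈ I satisfy deg(i_0) < ⋯ < deg(i_k), let m̄_1, …, m̄_k ∈ ℤ^n, and let σ_k be the linear k-simplex with vertex tuple (x_{i_0}, x_{i_1}+m̄_1, …, x_{i_k}+m̄_k). Then there exists θ ∈ π(intrinsic interior of convexHull of the vertices of σ_k) with the following property: for every ℓ < n, all j_0, …, j_ℓ ∈ I with deg(j_0) < ⋯ < deg(j_ℓ), and all m̄'_1, …, m̄'_ℓ ∈ ℤ^n with associated ℓ-simplex σ_ℓ having vertex tuple (x_{j_0}, x_{j_1}+m̄'_1, …, x_{j_ℓ}+m̄'_ℓ), if θ ∈ π(convexHull of the vertices of σ_ℓ) then σ_k is a face of σ_ℓ, i.e. there exist a strictly increasing map a : {0,…,k} → {0,…,ℓ} and t ∈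 ℤ^n such that x_{i_b} + m̄_b = x_{j_{a(b)}} + m̄'_{a(b)} + t for all 0 ≤ b ≤ k (with m̄_0 = m̄'_0 = 0). -/
open scoped BigOperators
open MeasureTheory

noncomputable section

namespace Stmt3Aux

open Set Function

variable {n : ℕ}

lemma zToR_add (a b : Zn n) : zToR (a + b) = zToR a + zToR b := by
  funext j; simp [zToR]

lemma zToR_sub (a b : Zn n) : zToR (a - b) = zToR a - zToR b := by
  funext j; simp [zToR]

lemma zToR_eq_zero_iff {a : Zn n} : zToR a = 0 ↔ a = 0 := by
  constructor
  · intro h; funext j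
    have := congrFun h j
    simpa [zToR] using this
  · rintro rfl; funext j; simp [zToR]

lemma isClosed_notLI {X : Type*} [TopologicalSpace X] {r : ℕ} {g : X → Fin r → Rn n}
    (hg : Continuous g) : IsClosed {x | ¬ LinearIndependent ℝ (g x)} := by
  have h : {x | ¬ LinearIndependent ℝ (g x)} = (g ⁻¹' {f | LinearIndependent ℝ f})ᶜ := rfl
  rw [h]
  exact (isOpen_setOf_linearIndependent.preimage hg).isClosed_compl

lemma prod_null_left {X Y : Type*} [MeasureSpace X] [MeasureSpace Y]
    [SigmaFinite (volume : Measure X)] [SigmaFinite (volume : Measure Y)]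
    {s : Set (X × Y)} (hs : MeasurableSet s)
    (h : ∀ x : X, volume {y : Y | (x, y) ∈ s} = 0) :
    (volume : Measure (X × Y)) s = 0 := by
  rw [Measure.volume_eq_prod, Measure.measure_prod_null hs]
  exact Filter.Eventually.of_forall fun x => h x

lemma prod_null_right {X Y : Type*} [MeasureSpace X] [MeasureSpace Y]
    [SigmaFinite (volume : Measure X)] [SigmaFinite (volume : Measure Y)]
    {s : Set (X × Y)} (hs : MeasurableSet s)
    (h : ∀ᵐ y : Y ∂volume, volume {x : X | (x, y) ∈ s} = 0) :
    (volume : Measure (X × Y)) s = 0 := by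
  rw [Measure.volume_eq_prod]
  have hswap : ((volume : Measure Y).prod (volume : Measure X)) (Prod.swap ⁻¹' s)
      = ((volume : Measure X).prod (volume : Measure Y)) s := by
    rw [← Measure.map_apply measurable_swap hs, Measure.prod_swap]
  rw [← hswap, Measure.measure_prod_null (measurable_swap hs)]
  exact h.mono fun y hy => hy

lemma span_range_ne_top {m : ℕ} (hm : m < n) (v : Fin m → Rn n) :
    Submodule.span ℝ (Set.range v) ≠ ⊤ := by
  intro h
  have h2 : Module.finrank ℝ ↥(Submodule.span ℝ (Set.range v)) ≤ m := by
    classical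
    refine (finrank_span_le_card (Set.range v)).trans ?_
    rw [Set.toFinset_range]
    exact (Finset.card_image_le).trans (by simp)
  rw [h, finrank_top] at h2
  have h3 : Module.finrank ℝ (Rn n) = n := Module.finrank_fin_fun ℝ
  omega

lemma span_null {m : ℕ} (hm : m < n) (v : Fin m → Rn n) :
    volume ((Submodule.span ℝ (Set.range v) : Submodule ℝ (Rn n)) : Set (Rn n)) = 0 :=
  Measure.addHaar_submodule volume _ (span_range_ne_top hm v)

section split

variable {r : ℕ}

def consSet (S : Set (Fin (r + 1) → Rn n)) : Set (Rn n × (Fin r → Rn n)) :=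
  {p | Fin.cons p.1 p.2 ∈ S}

lemma consSet_eq (S : Set (Fin (r + 1) → Rn n)) :
    consSet S = (MeasurableEquiv.piFinSuccAbove (fun _ : Fin (r + 1) => Rn n) 0).symm ⁻¹' S := by
  ext p
  have : (MeasurableEquiv.piFinSuccAbove (fun _ : Fin (r + 1) => Rn n) 0).symm p
      = Fin.cons p.1 p.2 := by
    show (Fin.insertNthEquiv (fun _ : Fin (r + 1) => Rn n) 0) p = Fin.cons p.1 p.2
    simp [Fin.insertNthEquiv]
  simp only [consSet, Set.mem_setOf_eq, Set.mem_preimage, this]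

lemma measurableSet_consSet {S : Set (Fin (r + 1) → Rn n)} (hS : MeasurableSet S) :
    MeasurableSet (consSet S) := by
  rw [consSet_eq]
  exact (MeasurableEquiv.piFinSuccAbove (fun _ : Fin (r + 1) => Rn n) 0).symm.measurable hS

lemma volume_eq_consSet {S : Set (Fin (r + 1) → Rn n)} (hS : MeasurableSet S) :
    volume S = volume (consSet S) := by
  rw [consSet_eq]
  have hmp := volume_preserving_piFinSuccAbove (fun _ : Fin (r + 1) => Rn n) 0
  have hpre : ⇑(MeasurableEquiv.piFinSuccAbove (fun _ : Fin (r + 1) => Rn n) 0) ⁻¹'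
      ((MeasurableEquiv.piFinSuccAbove (fun _ : Fin (r + 1) => Rn n) 0).symm ⁻¹' S) = S := by
    ext x; simp
  rw [← hmp.measure_preimage ((MeasurableEquiv.piFinSuccAbove
    (fun _ : Fin (r + 1) => Rn n) 0).symm.measurable hS).nullMeasurableSet, hpre]

end split

lemma li_null : ∀ r : ℕ, r ≤ n → volume {u : Fin r → Rn n | ¬ LinearIndependent ℝ u} = 0 := by
  intro r
  induction r with
  | zero =>
    intro _
    have h : {u : Fin 0 → Rn n | ¬ LinearIndependent ℝ u} = ∅ := by
      ext u; simp [linearIndependent_empty_type]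
    simp [h]
  | succ r ih =>
    intro hr
    have hSm : MeasurableSet {u : Fin (r + 1) → Rn n | ¬ LinearIndependent ℝ u} :=
      (isClosed_notLI continuous_id).measurableSet
    rw [volume_eq_consSet hSm]
    apply prod_null_right (measurableSet_consSet hSm)
    have hae : ∀ᵐ y : Fin r → Rn n ∂volume, LinearIndependent ℝ y := by
      rw [ae_iff]; exact ih (Nat.le_of_succ_le hr)
    refine hae.mono fun y hy => ?_
    have hsec : {z : Rn n | (z, y) ∈ consSet {u : Fin (r + 1) → Rn n | ¬ LinearIndependent ℝ u}}
        = ((Submodule.span ℝ (Set.range y) : Submodule ℝ (Rn n)) : Set (Rn n)) := by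
      ext z
      simp only [consSet, mem_setOf_eq, SetLike.mem_coe, linearIndependent_fin_cons]
      constructor
      · intro h; by_contra hm; exact h ⟨hy, hm⟩
      · intro hm h; exact h.2 hm
    rw [hsec]
    exact span_null (lt_of_lt_of_le (Nat.lt_succ_self r) hr) y

lemma cons_cons_swap {α : Type*} {l : ℕ} (δ z : α) (y : Fin l → α) :
    (Fin.cons δ (Fin.cons z y) : Fin (l + 2) → α) =
      (Fin.cons z (Fin.cons δ y) : Fin (l + 2) → α) ∘ (Equiv.swap 0 1) := by
  funext a
  refine Fin.cases ?_ (fun b => ?_) a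
  · rw [Function.comp_apply, Equiv.swap_apply_left, Fin.cons_zero, ← Fin.succ_zero_eq_one,
      Fin.cons_succ, Fin.cons_zero]
  · refine Fin.cases ?_ (fun c => ?_) b
    · rw [Function.comp_apply, Fin.succ_zero_eq_one, Equiv.swap_apply_right, Fin.cons_zero,
        ← Fin.succ_zero_eq_one, Fin.cons_succ, Fin.cons_zero]
    · have h1 : (c.succ.succ : Fin (l + 2)) ≠ 0 := Fin.succ_ne_zero _
      have h2 : (c.succ.succ : Fin (l + 2)) ≠ 1 := by
        rw [← Fin.succ_zero_eq_one]
        exact fun h => Fin.succ_ne_zero c (Fin.succ_injective _ h)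
      rw [Function.comp_apply, Equiv.swap_apply_of_ne_of_ne h1 h2, Fin.cons_succ, Fin.cons_succ,
        Fin.cons_succ, Fin.cons_succ]

lemma cons_null : ∀ l : ℕ, l < n → ∀ δ : Rn n, δ ≠ 0 →
    volume {u : Fin l → Rn n | ¬ LinearIndependent ℝ (Fin.cons δ u)} = 0 := by
  intro l
  induction l with
  | zero =>
    intro _ δ hδ
    have h : {u : Fin 0 → Rn n | ¬ LinearIndependent ℝ (Fin.cons δ u)} = ∅ := by
      ext u
      simp only [mem_setOf_eq, mem_empty_iff_false, iff_false, not_not,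
        linearIndependent_fin_cons]
      refine ⟨linearIndependent_empty_type, ?_⟩
      rw [Set.range_eq_empty, Submodule.span_empty, Submodule.mem_bot]
      exact hδ
    rw [h, measure_empty]
  | succ l ih =>
    intro hl δ hδ
    have hg : Continuous (fun u : Fin (l + 1) → Rn n => (Fin.cons δ u : Fin (l + 2) → Rn n)) := by
      refine continuous_pi fun a => ?_
      refine Fin.cases ?_ (fun b => ?_) a
      · simpa using continuous_const
      · simpa using continuous_apply b
    have hSm : MeasurableSet
        {u : Fin (l + 1) → Rn n | ¬ LinearIndependent ℝ (Fin.cons δ u)} :=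
      (isClosed_notLI hg).measurableSet
    rw [volume_eq_consSet hSm]
    apply prod_null_right (measurableSet_consSet hSm)
    have hae : ∀ᵐ y : Fin l → Rn n ∂volume, LinearIndependent ℝ (Fin.cons δ y) := by
      rw [ae_iff]; exact ih (lt_trans (Nat.lt_succ_self l) hl) δ hδ
    refine hae.mono fun y hy => ?_
    have key : ∀ z : Rn n, (¬ LinearIndependent ℝ (Fin.cons δ (Fin.cons z y)))
        ↔ z ∈ Submodule.span ℝ (Set.range (Fin.cons δ y : Fin (l + 1) → Rn n)) := by
      intro z
      rw [cons_cons_swap δ z y, linearIndependent_equiv (Equiv.swap (0 : Fin (l + 2)) 1),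
        linearIndependent_fin_cons]
      constructor
      · intro h; by_contra hm; exact h ⟨hy, hm⟩
      · intro hm h; exact h.2 hm
    have hsec : {z : Rn n | (z, y) ∈ consSet
        {u : Fin (l + 1) → Rn n | ¬ LinearIndependent ℝ (Fin.cons δ u)}}
        = ((Submodule.span ℝ (Set.range (Fin.cons δ y : Fin (l + 1) → Rn n)) :
            Submodule ℝ (Rn n)) : Set (Rn n)) := by
      ext z
      simp only [consSet, mem_setOf_eq, SetLike.mem_coe]
      exact key z
    rw [hsec]
    exact span_null hl _


lemma trans_null {r : ℕ} {N : Set (Fin r → Rn n)} (hNm : MeasurableSet N) (hN : volume N = 0)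
    (γ : Fin r → Rn n) :
    volume {y : Fin (r + 1) → Rn n | (fun b : Fin r => y b.succ - y 0 + γ b) ∈ N} = 0 := by
  have hmeas : Measurable (fun y : Fin (r + 1) → Rn n => fun b : Fin r => y b.succ - y 0 + γ b) :=
    measurable_pi_lambda _ fun b =>
      ((measurable_pi_apply b.succ).sub (measurable_pi_apply 0)).add measurable_const
  have hSm : MeasurableSet {y : Fin (r + 1) → Rn n | (fun b : Fin r => y b.succ - y 0 + γ b) ∈ N} :=
    hmeas hNm
  rw [volume_eq_consSet hSm]
  apply prod_null_left (measurableSet_consSet hSm)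
  intro z
  have hsec : {w : Fin r → Rn n | (z, w) ∈ consSet
      {y : Fin (r + 1) → Rn n | (fun b : Fin r => y b.succ - y 0 + γ b) ∈ N}}
      = (fun w : Fin r → Rn n => w + (fun b => γ b - z)) ⁻¹' N := by
    ext w
    simp only [consSet, mem_setOf_eq, mem_preimage]
    have h : (fun b : Fin r => (Fin.cons z w : Fin (r + 1) → Rn n) b.succ
        - (Fin.cons z w : Fin (r + 1) → Rn n) 0 + γ b)
        = w + (fun b => γ b - z) := by
      funext b
      simp only [Fin.cons_succ, Fin.cons_zero, Pi.add_apply]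
      abel
    rw [h]
  rw [hsec, measure_preimage_add_right]
  exact hN

lemma diff_null (r : ℕ) (hr : r ≤ n) (γ : Fin r → Rn n) :
    volume {y : Fin (r + 1) → Rn n |
      ¬ LinearIndependent ℝ (fun b : Fin r => y b.succ - y 0 + γ b)} = 0 :=
  trans_null (isClosed_notLI continuous_id).measurableSet (li_null r hr) γ

lemma consdiff_null (l : ℕ) (hl : l < n) (δ : Rn n) (hδ : δ ≠ 0) (γ : Fin l → Rn n) :
    volume {y : Fin (l + 1) → Rn n |
      ¬ LinearIndependent ℝ (Fin.cons δ (fun b : Fin l => y b.succ - y 0 + γ b))} = 0 := by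
  have hg : Continuous (fun u : Fin l → Rn n => (Fin.cons δ u : Fin (l + 1) → Rn n)) := by
    refine continuous_pi fun a => ?_
    refine Fin.cases ?_ (fun b => ?_) a
    · simpa using continuous_const
    · simpa using continuous_apply b
  exact trans_null (isClosed_notLI hg).measurableSet (cons_null l hl δ hδ) γ

def succEquivNeZero (r : ℕ) : Fin r ≃ {x : Fin (r + 1) // x ≠ 0} where
  toFun b := ⟨b.succ, Fin.succ_ne_zero b⟩
  invFun i := (i : Fin (r + 1)).pred i.2
  left_inv b := by simp
  right_inv i := Subtype.ext (Fin.succ_pred _ i.2)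

@[simp] lemma succEquivNeZero_coe (r : ℕ) (b : Fin r) :
    ((succEquivNeZero r b : {x : Fin (r + 1) // x ≠ 0}) : Fin (r + 1)) = b.succ := rfl

lemma ai_iff (r : ℕ) (c : Fin (r + 1) → Rn n) (y : Fin (r + 1) → Rn n) :
    AffineIndependent ℝ (fun a => y a + c a) ↔
    LinearIndependent ℝ (fun b : Fin r => y b.succ - y 0 + (c b.succ - c 0)) := by
  rw [affineIndependent_iff_linearIndependent_vsub ℝ _ 0,
    ← linearIndependent_equiv (succEquivNeZero r)]
  have h : ((fun i : {x : Fin (r + 1) // x ≠ 0} => (y i + c i) -ᵥ (y 0 + c 0))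
      ∘ (succEquivNeZero r)) = fun b : Fin r => y b.succ - y 0 + (c b.succ - c 0) := by
    funext b
    simp only [Function.comp_apply, succEquivNeZero, Equiv.coe_fn_mk, vsub_eq_sub]
    abel
  rw [h]

lemma ai_null (r : ℕ) (hr : r ≤ n) (c : Fin (r + 1) → Rn n) :
    volume {y : Fin (r + 1) → Rn n | ¬ AffineIndependent ℝ (fun a => y a + c a)} = 0 := by
  have hset : {y : Fin (r + 1) → Rn n | ¬ AffineIndependent ℝ (fun a => y a + c a)} =
      {y : Fin (r + 1) → Rn n |
        ¬ LinearIndependent ℝ (fun b : Fin r => y b.succ - y 0 + (fun b : Fin r => c b.succ - c 0) b)} := by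
    ext y
    simp only [mem_setOf_eq]
    rw [ai_iff r c y]
  rw [hset]
  exact diff_null r hr _


lemma pull_null {ι : Type} [Fintype ι] {r : ℕ} (g : Fin r → ι) (hg : Function.Injective g)
    {N : Set (Fin r → Rn n)} (hNm : MeasurableSet N) (hN : volume N = 0) :
    volume {x : ι → Rn n | (fun a => x (g a)) ∈ N} = 0 := by
  classical
  set p : ι → Prop := fun i => i ∈ Set.range g with hp
  set e₁ := MeasurableEquiv.piEquivPiSubtypeProd (fun _ : ι => Rn n) p with he₁
  have hmp₁ := volume_preserving_piEquivPiSubtypeProd (fun _ : ι => Rn n) p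
  set f : Fin r ≃ Subtype p := Equiv.ofInjective g hg with hf
  set e₂ := MeasurableEquiv.piCongrLeft (fun _ : Subtype p => Rn n) f with he₂
  have hmp₂ := volume_measurePreserving_piCongrLeft (fun _ : Subtype p => Rn n) f
  set N' : Set (Subtype p → Rn n) := ⇑e₂.symm ⁻¹' N with hN'
  have hN'm : MeasurableSet N' := e₂.symm.measurable hNm
  have hvolN' : volume N' = 0 := by
    rw [hN', (hmp₂.symm e₂).measure_preimage hNm.nullMeasurableSet]
    exact hN
  have hsymm_apply : ∀ (y : Subtype p → Rn n) (a : Fin r), e₂.symm y a = y (f a) := by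
    intro y a
    rfl
  have hset : {x : ι → Rn n | (fun a => x (g a)) ∈ N} = ⇑e₁ ⁻¹' (N' ×ˢ Set.univ) := by
    ext x
    simp only [mem_setOf_eq, mem_preimage, mem_prod, mem_univ, and_true, hN']
    have h1 : (e₁ x).1 = fun i : Subtype p => x i := rfl
    rw [h1]
    have h2 : e₂.symm (fun i : Subtype p => x i) = fun a : Fin r => x (g a) := by
      funext a
      rw [hsymm_apply]
      rfl
    rw [h2]
  rw [hset, hmp₁.measure_preimage ((hN'm.prod MeasurableSet.univ)).nullMeasurableSet,
    Measure.volume_eq_prod, Measure.prod_prod]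
  have key : ∀ (h1 h2 : Fintype (Subtype p)),
      (@volume _ (@MeasureSpace.pi _ h1 (fun _ => Rn n) fun _ => MeasureSpace.pi)) N' =
      (@volume _ (@MeasureSpace.pi _ h2 (fun _ => Rn n) fun _ => MeasureSpace.pi)) N' := by
    intro h1 h2
    cases Subsingleton.elim h1 h2
    rfl
  exact mul_eq_zero_of_left ((key _ _).trans hvolN') _


lemma measurableSet_notAI (r : ℕ) (c : Fin (r + 1) → Rn n) :
    MeasurableSet {y : Fin (r + 1) → Rn n | ¬ AffineIndependent ℝ (fun a => y a + c a)} := by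
  have hset : {y : Fin (r + 1) → Rn n | ¬ AffineIndependent ℝ (fun a => y a + c a)} =
      {y : Fin (r + 1) → Rn n | ¬ LinearIndependent ℝ
        ((fun y' : Fin (r + 1) → Rn n => fun b : Fin r => y' b.succ - y' 0 + (c b.succ - c 0)) y)} := by
    ext y
    simp only [mem_setOf_eq]
    rw [ai_iff]
  rw [hset]
  refine (isClosed_notLI ?_).measurableSet
  exact continuous_pi fun b =>
    ((continuous_apply (Fin.succ b)).sub (continuous_apply 0)).add continuous_const

lemma gen_ai (ι : Type) [Fintype ι] :
    ∀ᵐ x : ι → Rn n ∂volume, ∀ (r : ℕ) (g : Fin (r + 1) → ι) (q : Fin (r + 1) → Zn n),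
      r ≤ n → Function.Injective g →
      AffineIndependent ℝ (fun a => x (g a) + zToR (q a)) := by
  rw [ae_all_iff]
  intro r
  rw [ae_all_iff]
  intro g
  rw [ae_all_iff]
  intro q
  by_cases hc : r ≤ n ∧ Function.Injective g
  · have hbad : volume {x : ι → Rn n |
        ¬ AffineIndependent ℝ (fun a => x (g a) + zToR (q a))} = 0 := by
      have hset : {x : ι → Rn n | ¬ AffineIndependent ℝ (fun a => x (g a) + zToR (q a))}
          = {x : ι → Rn n | (fun a => x (g a)) ∈
              {y : Fin (r + 1) → Rn n | ¬ AffineIndependent ℝ (fun a => y a + zToR (q a))}} := rfl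
      rw [hset]
      exact pull_null g hc.2 (measurableSet_notAI r _) (ai_null r hc.1 _)
    have h0 : ∀ᵐ x : ι → Rn n ∂volume,
        AffineIndependent ℝ (fun a => x (g a) + zToR (q a)) := by
      rw [ae_iff]; exact hbad
    exact h0.mono fun x hx _ _ => hx
  · exact Filter.Eventually.of_forall fun x h1 h2 => absurd ⟨h1, h2⟩ hc

lemma gen_vs (ι : Type) [Fintype ι] :
    ∀ᵐ x : ι → Rn n ∂volume, ∀ (l : ℕ) (j : Fin (l + 1) → ι) (q : Fin (l + 1) → Zn n) (δ : Zn n),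
      l < n → Function.Injective j → δ ≠ 0 →
      zToR δ ∉ vectorSpan ℝ (Set.range fun a => x (j a) + zToR (q a)) := by
  rw [ae_all_iff]
  intro l
  rw [ae_all_iff]
  intro j
  rw [ae_all_iff]
  intro q
  rw [ae_all_iff]
  intro δ
  by_cases hc : l < n ∧ Function.Injective j ∧ δ ≠ 0
  · obtain ⟨hl, hj, hδ⟩ := hc
    set N := {y : Fin (l + 1) → Rn n | ¬ LinearIndependent ℝ
        (Fin.cons (zToR δ) (fun b : Fin l => y b.succ - y 0 + (zToR (q b.succ) - zToR (q 0))))}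
      with hNdef
    have hNm : MeasurableSet N := by
      refine (isClosed_notLI ?_).measurableSet
      refine continuous_pi fun a => ?_
      refine Fin.cases ?_ (fun b => ?_) a
      · simpa using continuous_const
      · simp only [Fin.cons_succ]
        exact ((continuous_apply (Fin.succ b)).sub (continuous_apply 0)).add continuous_const
    have hvol : volume N = 0 :=
      consdiff_null l hl (zToR δ) (fun h => hδ (zToR_eq_zero_iff.mp h)) _
    have hsub : {x : ι → Rn n |
        ¬ (zToR δ ∉ vectorSpan ℝ (Set.range fun a => x (j a) + zToR (q a)))}
        ⊆ {x : ι → Rn n | (fun a => x (j a)) ∈ N} := by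
      intro x hx
      simp only [mem_setOf_eq, not_not] at hx
      have hvs : vectorSpan ℝ (Set.range fun a => x (j a) + zToR (q a)) =
          Submodule.span ℝ (Set.range (fun b : Fin l =>
            x (j b.succ) - x (j 0) + (zToR (q b.succ) - zToR (q 0)))) := by
        rw [vectorSpan_range_eq_span_range_vsub_right_ne ℝ _ 0]
        congr 1
        ext v
        constructor
        · rintro ⟨⟨i, hi⟩, rfl⟩
          refine ⟨i.pred hi, ?_⟩
          simp only [vsub_eq_sub, Fin.succ_pred]
          abel
        · rintro ⟨b, rfl⟩
          refine ⟨⟨b.succ, Fin.succ_ne_zero b⟩, ?_⟩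
          simp only [vsub_eq_sub]
          abel
      rw [hvs] at hx
      simp only [mem_setOf_eq, hNdef]
      intro hLI
      exact (linearIndependent_fin_cons.mp hLI).2 hx
    have h0 : ∀ᵐ x : ι → Rn n ∂volume,
        zToR δ ∉ vectorSpan ℝ (Set.range fun a => x (j a) + zToR (q a)) := by
      rw [ae_iff]
      exact measure_mono_null hsub (pull_null j hj hNm hvol)
    exact h0.mono fun x hx _ _ _ => hx
  · exact Filter.Eventually.of_forall fun x h1 h2 h3 => absurd ⟨h1, h2, h3⟩ hc

lemma cons_injective {α : Type*} {m : ℕ} {z : α} {f : Fin m → α} (hf : Function.Injective f)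
    (hz : z ∉ Set.range f) : Function.Injective (Fin.cons z f : Fin (m + 1) → α) := by
  intro a a' h
  rcases Fin.eq_zero_or_eq_succ a with rfl | ⟨c, rfl⟩ <;>
    rcases Fin.eq_zero_or_eq_succ a' with rfl | ⟨c', rfl⟩
  · rfl
  · rw [Fin.cons_zero, Fin.cons_succ] at h
    exact absurd ⟨c', h.symm⟩ hz
  · rw [Fin.cons_succ, Fin.cons_zero] at h
    exact absurd ⟨c, h⟩ hz
  · rw [Fin.cons_succ, Fin.cons_succ] at h
    rw [hf h]

end Stmt3Aux

/-- for almost every configuration, every simplex with strictly increasing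
degrees contains an interior point `θ` lying only on those simplices (with strictly
increasing degrees, dimension `< n`) having it as a face. -/

theorem stmt3 (n : ℕ) (hn : 1 ≤ n) (F : BasedSeq n) :
    ∀ᵐ x : F.I → Rn n ∂volume,
      ∀ (k : ℕ), k < n → ∀ (i : Fin (k + 1) → F.I),
        StrictMono (fun a => F.deg (i a)) →
        ∀ mb : Fin (k + 1) → Zn n, mb 0 = 0 →
          ∃ θ ∈ toTorus '' intrinsicInterior ℝ
              (convexHull ℝ (Set.range fun a => x (i a) + zToR (mb a))),
            ∀ (l : ℕ), l < n → ∀ (j : Fin (l + 1) → F.I),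
              StrictMono (fun a => F.deg (j a)) →
              ∀ mb' : Fin (l + 1) → Zn n, mb' 0 = 0 →
                θ ∈ toTorus '' convexHull ℝ (Set.range fun a => x (j a) + zToR (mb' a)) →
                ∃ a : Fin (k + 1) → Fin (l + 1), StrictMono a ∧
                  ∃ t : Zn n, ∀ b : Fin (k + 1),
                    x (i b) + zToR (mb b) = x (j (a b)) + zToR (mb' (a b)) + zToR t := by
  classical
  filter_upwards [Stmt3Aux.gen_ai (n := n) F.I, Stmt3Aux.gen_vs (n := n) F.I] with x hx1 hx2
  intro k hk i hi mb hmb0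
  have hinj : Function.Injective i := fun a b hab => hi.injective (by rw [hab])
  set P : Fin (k + 1) → Rn n := fun a => x (i a) + zToR (mb a) with hPdef
  set v : Fin k → Rn n := fun b => P b.succ - P 0 with hvdef
  set L : (Fin k → ℝ) →ₗ[ℝ] Rn n :=
    { toFun := fun μ => ∑ b : Fin k, μ b • v b
      map_add' := fun μ1 μ2 => by simp [add_smul, Finset.sum_add_distrib]
      map_smul' := fun c μ => by simp [smul_smul, Finset.smul_sum] } with hLdef
  set ψ : (Fin k → ℝ) →ᵃ[ℝ] Rn n := AffineMap.mk' (fun μ => P 0 + L μ) L 0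
    (fun μ => by
      simp only [vsub_eq_sub, sub_zero, vadd_eq_add, map_zero, add_zero]
      abel) with hψdef
  have hψ_apply : ∀ μ, ψ μ = P 0 + L μ := fun μ => rfl
  have hψA : ∀ μ, ψ μ ∈ affineSpan ℝ (convexHull ℝ (Set.range P)) := by
    intro μ
    rw [hψ_apply]
    have hP0 : P 0 ∈ affineSpan ℝ (convexHull ℝ (Set.range P)) :=
      subset_affineSpan ℝ _ (subset_convexHull ℝ _ ⟨0, rfl⟩)
    have hdir : L μ ∈ (affineSpan ℝ (convexHull ℝ (Set.range P))).direction := by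
      rw [direction_affineSpan]
      have hLμ : L μ = ∑ b : Fin k, μ b • v b := rfl
      rw [hLμ]
      refine Submodule.sum_mem _ fun b _ => Submodule.smul_mem _ _ ?_
      have h1 : P b.succ ∈ convexHull ℝ (Set.range P) := subset_convexHull ℝ _ ⟨b.succ, rfl⟩
      have h2 : P 0 ∈ convexHull ℝ (Set.range P) := subset_convexHull ℝ _ ⟨0, rfl⟩
      have h3 := vsub_mem_vectorSpan ℝ h1 h2
      rw [vsub_eq_sub] at h3
      exact h3
    have h4 := AffineSubspace.vadd_mem_of_mem_direction hdir hP0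
    rw [vadd_eq_add] at h4
    have h5 : P 0 + L μ = L μ + P 0 := add_comm _ _
    rw [h5]
    exact h4
  have hPmem : ∀ a, P a ∈ Set.range ⇑ψ := by
    intro a
    refine Fin.cases ?_ (fun b => ?_) a
    · refine ⟨0, ?_⟩
      rw [hψ_apply]
      simp
    · refine ⟨Pi.single b 1, ?_⟩
      rw [hψ_apply]
      have hL : L (Pi.single b 1) = v b := by
        show (∑ b' : Fin k, Pi.single b 1 b' • v b') = v b
        rw [Finset.sum_eq_single b]
        · simp
        · intro b' _ hb'
          rw [Pi.single_eq_of_ne hb']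
          simp
        · intro hb
          exact absurd (Finset.mem_univ b) hb
      rw [hL]
      show P 0 + (P b.succ - P 0) = P b.succ
      abel
  have hrange : Set.range ⇑ψ = (affineSpan ℝ (convexHull ℝ (Set.range P)) : Set (Rn n)) := by
    apply Set.Subset.antisymm
    · rintro _ ⟨μ, rfl⟩
      exact hψA μ
    · intro y hy
      have h1 : affineSpan ℝ (convexHull ℝ (Set.range P)) ≤
          (⊤ : AffineSubspace ℝ (Fin k → ℝ)).map ψ := by
        rw [affineSpan_convexHull]
        refine affineSpan_le.mpr ?_
        rintro _ ⟨a, rfl⟩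
        rw [AffineSubspace.coe_map]
        obtain ⟨μ, hμ⟩ := hPmem a
        exact ⟨μ, by simp, hμ⟩
      have h2 : y ∈ (⊤ : AffineSubspace ℝ (Fin k → ℝ)).map ψ := h1 hy
      obtain ⟨μ, -, rfl⟩ := AffineSubspace.mem_map.mp h2
      exact ⟨μ, rfl⟩
  have hψcont : Continuous ⇑ψ := ψ.continuous_of_finiteDimensional
  set φ : (Fin k → ℝ) → (affineSpan ℝ (convexHull ℝ (Set.range P))) :=
    fun μ => ⟨ψ μ, hψA μ⟩ with hφdef
  have hφcont : Continuous φ := Continuous.subtype_mk hψcont _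
  have hIne : (intrinsicInterior ℝ (convexHull ℝ (Set.range P))).Nonempty :=
    Set.Nonempty.intrinsicInterior (convex_convexHull ℝ _) ((Set.range_nonempty P).convexHull)
  set Ω : Set (Fin k → ℝ) := φ ⁻¹' (interior
    (((↑) : affineSpan ℝ (convexHull ℝ (Set.range P)) → Rn n) ⁻¹'
      (convexHull ℝ (Set.range P)))) with hΩdef
  have hΩopen : IsOpen Ω := isOpen_interior.preimage hφcont
  have hΩne : Ω.Nonempty := by
    obtain ⟨w0, hw0⟩ := hIne
    rw [mem_intrinsicInterior] at hw0
    obtain ⟨y0, hy0, hy0e⟩ := hw0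
    have hy0m : (y0 : Rn n) ∈ (affineSpan ℝ (convexHull ℝ (Set.range P)) : Set (Rn n)) := y0.2
    rw [← hrange] at hy0m
    obtain ⟨μ0, hμ0⟩ := hy0m
    refine ⟨μ0, ?_⟩
    have hφμ0 : φ μ0 = y0 := Subtype.ext hμ0
    show φ μ0 ∈ interior _
    rw [hφμ0]
    exact hy0
  set BadSet : (Σ l : ℕ, (Fin (l + 1) → F.I) × (Fin (l + 1) → Zn n) × Zn n) →
      Set (Fin k → ℝ) := fun d =>
    {μ : Fin k → ℝ |
      (d.1 < n ∧ Function.Injective d.2.1 ∧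
        ¬ ∀ b : Fin (k + 1), ∃ a : Fin (d.1 + 1), d.2.1 a = i b ∧ mb b = d.2.2.1 a + d.2.2.2) ∧
      ψ μ ∈ (fun y => y + zToR d.2.2.2) ''
        (convexHull ℝ (Set.range fun a => x (d.2.1 a) + zToR (d.2.2.1 a)))} with hBadSet
  have hBadNull : ∀ d, volume (BadSet d) = 0 := by
    rintro ⟨l, j, mb', t⟩
    by_cases hcond : l < n ∧ Function.Injective j ∧
        ¬ ∀ b : Fin (k + 1), ∃ a : Fin (l + 1), j a = i b ∧ mb b = mb' a + t
    · obtain ⟨hl, hjinj, hnface⟩ := hcond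
      push_neg at hnface
      obtain ⟨b, hb⟩ := hnface
      set p'' : Fin (l + 1) → Rn n := fun a => x (j a) + zToR (mb' a) + zToR t with hp''
      have hPb : P b ∉ affineSpan ℝ (Set.range p'') := by
        by_cases hmem : i b ∈ Set.range j
        · obtain ⟨a₀, ha₀⟩ := hmem
          intro hPbA
          have hp''A : p'' a₀ ∈ affineSpan ℝ (Set.range p'') :=
            subset_affineSpan ℝ _ ⟨a₀, rfl⟩
          have hdiff := AffineSubspace.vsub_mem_direction hPbA hp''A
          rw [direction_affineSpan] at hdiff
          have hcalc : P b -ᵥ p'' a₀ = zToR (mb b - (mb' a₀ + t)) := by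
            rw [vsub_eq_sub, Stmt3Aux.zToR_sub, Stmt3Aux.zToR_add, hPdef, hp'']
            dsimp only
            rw [ha₀]
            abel
          rw [hcalc] at hdiff
          have hvs := hx2 l j (fun a => mb' a + t) (mb b - (mb' a₀ + t)) hl hjinj
            (sub_ne_zero.mpr (hb a₀ ha₀))
          apply hvs
          have hfun : (fun a => x (j a) + zToR (mb' a + t)) = p'' := by
            funext a
            rw [Stmt3Aux.zToR_add, hp'']
            dsimp only
            rw [add_assoc]
          rw [hfun]
          exact hdiff
        · have hg2inj : Function.Injective (Fin.cons (i b) j : Fin (l + 2) → F.I) :=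
            Stmt3Aux.cons_injective hjinj hmem
          have hAI := hx1 (l + 1) (Fin.cons (i b) j)
            (Fin.cons (mb b) (fun a => mb' a + t)) (by omega) hg2inj
          have hnot := hAI.notMem_affineSpan_diff 0 Set.univ
          have him : ((fun a => x ((Fin.cons (i b) j : Fin (l + 2) → F.I) a)
              + zToR ((Fin.cons (mb b) (fun a => mb' a + t) : Fin (l + 2) → Zn n) a)) ''
              (Set.univ \ {0})) = Set.range p'' := by
            ext z
            constructor
            · rintro ⟨a, ⟨-, ha0⟩, rfl⟩
              have ha0' : a ≠ 0 := by simpa using ha0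
              obtain ⟨a', rfl⟩ := Fin.exists_succ_eq.mpr ha0'
              refine ⟨a', ?_⟩
              rw [hp'']
              dsimp only
              rw [Fin.cons_succ, Fin.cons_succ, Stmt3Aux.zToR_add, add_assoc]
            · rintro ⟨a', rfl⟩
              refine ⟨a'.succ, ⟨Set.mem_univ _, by simp [Fin.succ_ne_zero]⟩, ?_⟩
              rw [hp'']
              dsimp only
              rw [Fin.cons_succ, Fin.cons_succ, Stmt3Aux.zToR_add, add_assoc]
          rw [him] at hnot
          simpa using hnot
      have hcomne : AffineSubspace.comap ψ (affineSpan ℝ (Set.range p'')) ≠ ⊤ := by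
        intro htop
        apply hPb
        obtain ⟨μb, hμb⟩ := hPmem b
        have hmemb : μb ∈ AffineSubspace.comap ψ (affineSpan ℝ (Set.range p'')) := by
          rw [htop]
          exact AffineSubspace.mem_top ℝ _ _
        rw [AffineSubspace.mem_comap, hμb] at hmemb
        exact hmemb
      refine measure_mono_null ?_ (Measure.addHaar_affineSubspace volume _ hcomne)
      intro μ hμ
      rw [hBadSet] at hμ
      obtain ⟨-, hmem2⟩ := hμ
      obtain ⟨y, hy, hye⟩ := hmem2
      rw [SetLike.mem_coe, AffineSubspace.mem_comap]
      have hye' : y + zToR t = ψ μ := hye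
      rw [← hye']
      have h1 : y ∈ affineSpan ℝ (Set.range fun a => x (j a) + zToR (mb' a)) :=
        convexHull_subset_affineSpan _ hy
      have h2 : ((AffineEquiv.constVAdd ℝ (Rn n) (zToR t)).toAffineMap) y
          ∈ (affineSpan ℝ (Set.range fun a => x (j a) + zToR (mb' a))).map
            ((AffineEquiv.constVAdd ℝ (Rn n) (zToR t)).toAffineMap) :=
        AffineSubspace.mem_map.mpr ⟨y, h1, rfl⟩
      rw [AffineSubspace.map_span] at h2
      have h3 : ⇑((AffineEquiv.constVAdd ℝ (Rn n) (zToR t)).toAffineMap) ''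
          (Set.range fun a => x (j a) + zToR (mb' a)) = Set.range p'' := by
        rw [← Set.range_comp]
        refine congrArg Set.range (funext fun a => ?_)
        show zToR t +ᵥ (x (j a) + zToR (mb' a)) = p'' a
        rw [hp'']
        dsimp only
        rw [vadd_eq_add]
        abel
      rw [h3] at h2
      have h4 : ((AffineEquiv.constVAdd ℝ (Rn n) (zToR t)).toAffineMap) y = y + zToR t := by
        show zToR t +ᵥ y = y + zToR t
        rw [vadd_eq_add, add_comm]
      rwa [h4] at h2
    · have hempty : BadSet ⟨l, j, mb', t⟩ = ∅ := by
        rw [hBadSet]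
        ext μ
        simp only [Set.mem_setOf_eq, Set.mem_empty_iff_false, iff_false, not_and]
        intro h1
        exact absurd h1 hcond
      rw [hempty]
      simp
  have hUnull : volume (⋃ d, BadSet d) = 0 := measure_iUnion_null hBadNull
  have hnsub : ¬ Ω ⊆ ⋃ d, BadSet d := by
    intro hsub
    exact absurd (measure_mono_null hsub hUnull) (hΩopen.measure_pos volume hΩne).ne'
  obtain ⟨μpt, hμΩ, hμB⟩ := Set.not_subset.mp hnsub
  refine ⟨toTorus (ψ μpt), ⟨ψ μpt, mem_intrinsicInterior.mpr ⟨φ μpt, hμΩ, rfl⟩, rfl⟩, ?_⟩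
  intro l hl j hj mb' hmb'0 hθ
  obtain ⟨pq, hpq, hpqe⟩ := hθ
  have hlat : -pq + ψ μpt ∈ intLattice n := QuotientAddGroup.eq.mp hpqe
  have htEx : ∃ t : Zn n, zToR t = ψ μpt - pq := by
    have hcomp : ∀ j' : Fin n, (-pq + ψ μpt) j' ∈ AddSubgroup.zmultiples (1 : ℝ) := by
      intro j'
      exact (AddSubgroup.mem_pi Set.univ).mp hlat j' (Set.mem_univ j')
    choose m hm using fun j' => AddSubgroup.mem_zmultiples_iff.mp (hcomp j')
    refine ⟨m, funext fun j' => ?_⟩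
    have hmj := hm j'
    rw [zsmul_eq_mul, mul_one] at hmj
    show (m j' : ℝ) = (ψ μpt - pq) j'
    rw [hmj]
    show (-pq + ψ μpt) j' = (ψ μpt - pq) j'
    simp [sub_eq_neg_add]
  obtain ⟨t, ht⟩ := htEx
  have hjinj : Function.Injective j := fun a b hab => hj.injective (by rw [hab])
  by_cases hface : ∀ b : Fin (k + 1), ∃ a : Fin (l + 1), j a = i b ∧ mb b = mb' a + t
  · choose a ha1 ha2 using hface
    refine ⟨a, ?_, t, ?_⟩
    · intro b b' hbb'
      have hd : F.deg (j (a b)) < F.deg (j (a b')) := by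
        rw [ha1 b, ha1 b']
        exact hi hbb'
      exact hj.lt_iff_lt.mp hd
    · intro b
      rw [ha1 b, ha2 b, Stmt3Aux.zToR_add, ← add_assoc]
  · exfalso
    apply hμB
    rw [Set.mem_iUnion]
    refine ⟨⟨l, j, mb', t⟩, ?_⟩
    rw [hBadSet]
    refine ⟨⟨hl, hjinj, hface⟩, ?_⟩
    refine ⟨pq, hpq, ?_⟩
    show pq + zToR t = ψ μpt
    rw [ht]
    abel

end
end

section
/- Let X = (X_k)_{k≥0} be a finite, linear semi-simplicial complex over T^n (each X_k a finite set of linear k-simplices over T^n, closed under passing to facets) whose 0-simplices have pairwise distinct images in T^n. Suppose there exists a function deg : X_0 → ℤ such that: (1) an edge [x,y] mod ℤ^n belongs to X_1 if and only if for some k there exist x_0 = x, x_1, …, x_k = y ∈ ℝ^n with [x_i] mod ℤ^n ∈ X_0 for all i and, for each 1 ≤ i ≤ k, [x_{i−1}, x_i] mod ℤ^n ∈ X_1 of degree one (meaning deg([x_i] mod ℤ^n) − deg([x_{i−1}] mod ℤ^n) = 1); and (2) for k > 1, a k-simplex [x_0, …, x_k] mod ℤ^n belongs to X_k if and only if [x_i]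 mod ℤ^n ∈ X_0 for all 0 ≤ i ≤ k and [x_{i−1}, x_i] mod ℤ^n ∈ X_1 for all 1 ≤ i ≤ k. Then there exist a bounded based sequence F^• of finite-rank free R_n-modules (with index sets I_k and matrix entries d^k_{ij} ∈ R_n, which may all be taken with all nonzero coefficients equal to 1) and points x_i ∈ ℝ^n, such that X_k = X(F^•)_k for all k ≥ 0. -/
open scoped BigOperators
open MeasureTheory

noncomputable section

/-!
Take one basis vector for each vertex `v` of the complex in `T^n`, placed in degree `vdeg v`
(shifted so that the top degree is `0`), with a representative `x_v ∈ ℝ^n`, and let `d_{vw}` be the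
sum of the monomials `z^m` over the edges `[x_w, x_v + m]` of `X_1` that raise the degree by one.
Exponent chains of `F^•` are then the same thing as chains of degree-one edges, so condition (1)
says that `E_{vw}` is exactly the set of `m` with `[x_w, x_v + m] ∈ X_1`. Because distinct
vertices have distinct images in `T^n`, a simplex of `X(F^•)` is determined by its vertices and its
consecutive edges, and by condition (2) the same holds for `X`.
-/

open Relation

section Lattice

variable {n : ℕ}

lemma zToR_add (a b : Zn n) : zToR (a + b) = zToR a + zToR b := by
  funext j; simp [zToR]

lemma zToR_neg (a : Zn n) : zToR (-a) = -zToR a := by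
  funext j; simp [zToR]

lemma zToR_injective : Function.Injective (zToR (n := n)) := fun _ _ h =>
  Int.cast_injective.comp_left h

lemma mem_intLattice_iff {v : Rn n} : v ∈ intLattice n ↔ ∃ t : Zn n, zToR t = v := by
  simp only [intLattice, AddSubgroup.mem_pi, Set.mem_univ, forall_const,
    AddSubgroup.mem_zmultiples_iff, zsmul_one, Classical.skolem, funext_iff, zToR]

lemma toTorus_eq_toTorus_iff {p q : Rn n} :
    toTorus p = toTorus q ↔ ∃ t : Zn n, q = p + zToR t := by
  simp only [toTorus, QuotientAddGroup.eq, mem_intLattice_iff, neg_add_eq_sub,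
    eq_sub_iff_add_eq, add_comm p, eq_comm (a := q)]

lemma toTorus_add_zToR (p : Rn n) (t : Zn n) : toTorus (p + zToR t) = toTorus p :=
  (toTorus_eq_toTorus_iff.2 ⟨t, rfl⟩).symm

lemma eq_of_add_zToR_eq {ι : Type*} {x : ι → Rn n} (hx : Function.Injective (toTorus ∘ x))
    {i j : ι} {s t : Zn n} (h : x i + zToR s = x j + zToR t) : i = j ∧ s = t := by
  obtain rfl : i = j := hx <| by
    simpa only [Function.comp_apply, toTorus_add_zToR] using congrArg toTorus h
  exact ⟨rfl, zToR_injective (add_left_cancel h)⟩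

end Lattice

section PartialSums

variable {M : Type*} {k : ℕ}

lemma sum_filter_val_lt_succ [AddCommMonoid M] (m : Fin k → M) (a : Fin k) :
    ∑ ℓ ∈ Finset.univ.filter (fun ℓ : Fin k => (ℓ : ℕ) < (a.succ : ℕ)), m ℓ
      = ∑ ℓ ∈ Finset.univ.filter (fun ℓ : Fin k => (ℓ : ℕ) < (a.castSucc : ℕ)), m ℓ + m a := by
  have h : Finset.univ.filter (fun ℓ : Fin k => (ℓ : ℕ) < (a.succ : ℕ))
      = insert a (Finset.univ.filter fun ℓ : Fin k => (ℓ : ℕ) < (a.castSucc : ℕ)) := by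
    ext ℓ
    simp only [Fin.val_succ, Fin.val_castSucc, Finset.mem_filter, Finset.mem_univ, true_and,
      Finset.mem_insert, Fin.ext_iff]
    omega
  rw [h, Finset.sum_insert (by simp), add_comm]

lemma sum_filter_val_lt_sub [AddCommGroup M] (t : Fin (k + 1) → M) (a : Fin (k + 1)) :
    ∑ ℓ ∈ Finset.univ.filter (fun ℓ : Fin k => (ℓ : ℕ) < (a : ℕ)), (t ℓ.succ - t ℓ.castSucc)
      = t a - t 0 := by
  induction a using Fin.induction with
  | zero => simp
  | succ a ih => rw [sum_filter_val_lt_succ, ih]; abel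

end PartialSums

lemma Relation.transGen_iff_exists_fin {α : Type*} {r : α → α → Prop} {a b : α} :
    TransGen r a b ↔ ∃ (k : ℕ) (c : Fin (k + 2) → α), c 0 = a ∧ c (Fin.last (k + 1)) = b ∧
      ∀ i : Fin (k + 1), r (c i.castSucc) (c i.succ) := by
  constructor
  · intro h
    induction h using TransGen.head_induction_on with
    | single hab => exact ⟨0, ![_, b], rfl, rfl, fun i => by fin_cases i; exact hab⟩
    | head hab _ ih =>
      obtain ⟨k, c, rfl, rfl, hc⟩ := ih
      refine ⟨k + 1, Fin.cons _ c, rfl, rfl, Fin.cases hab fun i => ?_⟩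
      simpa only [← Fin.succ_castSucc, Fin.cons_succ] using hc i
  · rintro ⟨k, c, rfl, rfl, hc⟩
    induction k with
    | zero => exact .single (hc 0)
    | succ k ih =>
      exact .head (hc 0) (ih (fun i => c i.succ) fun i => by
        simpa only [← Fin.succ_castSucc] using hc i.succ)

namespace BasedSeq

variable {n : ℕ} (F : BasedSeq n) (x : F.I → Rn n)

lemma deg_eq_add_one_of_mem_support {i j : F.I} {m : Zn n} (hm : m ∈ (F.d i j).coeff.support) :
    F.deg i = F.deg j + 1 := by
  by_contra h
  simp [F.d_eq_zero i j h] at hm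

def LiftedStep (p q : Rn n) : Prop :=
  ∃ i j s m, p = x j + zToR s ∧ q = x i + zToR (s + m) ∧ m ∈ (F.d i j).coeff.support

lemma transGen_liftedStep_of_eChain {i j : F.I} {m : Zn n} (h : EChain F i j m) (s : Zn n) :
    TransGen (F.LiftedStep x) (x j + zToR s) (x i + zToR (s + m)) := by
  induction h generalizing s with
  | base _ hm => exact .single ⟨_, _, s, _, rfl, rfl, hm⟩
  | step _ _ hm ih => exact (ih s).tail ⟨_, _, _, _, rfl, by rw [add_assoc], hm⟩

lemma eChain_of_transGen_liftedStep (hx : Function.Injective (toTorus ∘ x)) {p q : Rn n}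
    (h : TransGen (F.LiftedStep x) p q) {i j : F.I} {s t : Zn n}
    (hp : p = x j + zToR s) (hq : q = x i + zToR t) : EChain F i j (t - s) := by
  induction h generalizing i t with
  | single hstep =>
    obtain ⟨i', j', s', m, hp', hq', hm⟩ := hstep
    obtain ⟨rfl, rfl⟩ := eq_of_add_zToR_eq hx (hp.symm.trans hp')
    obtain ⟨rfl, rfl⟩ := eq_of_add_zToR_eq hx (hq.symm.trans hq')
    simpa using EChain.base (F.deg_eq_add_one_of_mem_support hm) hm
  | tail _ hstep ih =>
    obtain ⟨i', j', s', m, hb, hq', hm⟩ := hstep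
    obtain ⟨rfl, rfl⟩ := eq_of_add_zToR_eq hx (hq.symm.trans hq')
    convert EChain.step (ih hb) (F.deg_eq_add_one_of_mem_support hm) hm using 1
    abel

lemma inX_iff_exists_lift {k : ℕ} (y : Fin (k + 1) → Rn n) :
    InX F x k y ↔ ∃ (c : Fin (k + 1) → F.I) (t : Fin (k + 1) → Zn n),
      (∀ a, y a = x (c a) + zToR (t a)) ∧
        ∀ ℓ : Fin k, t ℓ.succ - t ℓ.castSucc ∈ Eset F (c ℓ.succ) (c ℓ.castSucc) := by
  constructor
  · rintro ⟨c, m, t₀, hm, hy⟩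
    refine ⟨c, fun a => ∑ ℓ ∈ Finset.univ.filter (fun ℓ : Fin k => (ℓ : ℕ) < (a : ℕ)), m ℓ + t₀,
      fun a => ?_, fun ℓ => ?_⟩
    · rw [hy a, vtx, zToR_add, add_assoc]
    · simpa only [sum_filter_val_lt_succ, add_right_comm _ (m ℓ), add_sub_cancel_left] using hm ℓ
  · rintro ⟨c, t, hy, ht⟩
    refine ⟨c, fun ℓ => t ℓ.succ - t ℓ.castSucc, t 0, ht, fun a => ?_⟩
    rw [hy a, vtx, sum_filter_val_lt_sub, add_assoc, ← zToR_add, sub_add_cancel]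

lemma inX_one_iff (p q : Rn n) :
    InX F x 1 ![p, q] ↔
      ∃ i j s t, p = x j + zToR s ∧ q = x i + zToR t ∧ t - s ∈ Eset F i j := by
  rw [inX_iff_exists_lift]
  constructor
  · rintro ⟨c, t, hy, ht⟩
    exact ⟨c 1, c 0, t 0, t 1, hy 0, hy 1, ht 0⟩
  · rintro ⟨i, j, s, t, hp, hq, hE⟩
    refine ⟨![j, i], ![s, t], fun a => ?_, fun ℓ => ?_⟩
    · fin_cases a <;> assumption
    · fin_cases ℓ; exact hE

lemma inX_one_iff_transGen (hx : Function.Injective (toTorus ∘ x)) (p q : Rn n) :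
    InX F x 1 ![p, q] ↔ TransGen (F.LiftedStep x) p q := by
  rw [inX_one_iff]
  constructor
  · rintro ⟨i, j, s, t, rfl, rfl, hE⟩
    simpa using F.transGen_liftedStep_of_eChain x hE s
  · intro h
    obtain ⟨_, ⟨-, j, s, -, hp, -⟩, -⟩ := TransGen.head'_iff.1 h
    obtain ⟨_, -, ⟨i, -, s', m, -, hq, -⟩⟩ := TransGen.tail'_iff.1 h
    exact ⟨i, j, s, s' + m, hp, hq, F.eChain_of_transGen_liftedStep x hx h hp hq⟩

lemma inX_iff_forall_vertex_and_edge (hx : Function.Injective (toTorus ∘ x)) {k : ℕ}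
    (y : Fin (k + 1) → Rn n) :
    InX F x k y ↔ (∀ a, ∃ i t, y a = x i + zToR t) ∧
      ∀ ℓ : Fin k, InX F x 1 ![y ℓ.castSucc, y ℓ.succ] := by
  constructor
  · rw [inX_iff_exists_lift]
    rintro ⟨c, t, hy, ht⟩
    exact ⟨fun a => ⟨c a, t a, hy a⟩,
      fun ℓ => (F.inX_one_iff x _ _).2 ⟨_, _, _, _, hy _, hy _, ht ℓ⟩⟩
  · rintro ⟨hv, he⟩
    choose c t hy using hv
    refine (F.inX_iff_exists_lift x y).2 ⟨c, t, hy, fun ℓ => ?_⟩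
    obtain ⟨i, j, s, s', hp, hq, hE⟩ := (F.inX_one_iff x _ _).1 (he ℓ)
    obtain ⟨rfl, rfl⟩ := eq_of_add_zToR_eq hx (hp.symm.trans (hy ℓ.castSucc))
    obtain ⟨rfl, rfl⟩ := eq_of_add_zToR_eq hx (hq.symm.trans (hy ℓ.succ))
    exact hE

def ofExponents (I : Type) [Fintype I] [Nonempty I] (w : I → ℤ) (S : I → I → Finset (Zn n)) :
    BasedSeq n where
  I := I
  fintypeI := inferInstance
  deg i := w i - Finset.univ.sup' Finset.univ_nonempty w
  deg_nonpos i := sub_nonpos.2 (Finset.le_sup' w (Finset.mem_univ i))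
  exists_deg_zero := by
    obtain ⟨i, -, hi⟩ := Finset.exists_mem_eq_sup' Finset.univ_nonempty w
    exact ⟨i, sub_eq_zero.2 hi.symm⟩
  d i j := if w i = w j + 1 then AddMonoidAlgebra.ofCoeff (Finsupp.indicator (S i j) fun _ _ => 1)
    else 0
  d_eq_zero i j h := if_neg fun h' => h (by omega)

variable {I : Type} [Fintype I] [Nonempty I] {w : I → ℤ} {S : I → I → Finset (Zn n)}

lemma coeff_ofExponents (i j : I) (m : Zn n) :
    ((ofExponents I w S).d i j).coeff m = if w i = w j + 1 ∧ m ∈ S i j then 1 else 0 := by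
  classical
  by_cases h : w i = w j + 1
  · simp [ofExponents, h, Finsupp.indicator_apply]
  · simp [ofExponents, h]

lemma mem_support_ofExponents {i j : I} {m : Zn n} :
    m ∈ ((ofExponents I w S).d i j).coeff.support ↔ w i = w j + 1 ∧ m ∈ S i j := by
  rw [Finsupp.mem_support_iff, coeff_ofExponents]
  split_ifs with h
  exacts [iff_of_true one_ne_zero h, iff_of_false (not_not.2 rfl) h]

lemma coeff_ofExponents_of_mem_support {i j : I} {m : Zn n}
    (hm : m ∈ ((ofExponents I w S).d i j).coeff.support) :
    ((ofExponents I w S).d i j).coeff m = 1 := by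
  rw [coeff_ofExponents, if_pos (mem_support_ofExponents.1 hm)]

end BasedSeq

section DegreeComplex

variable {n : ℕ} (Xp : (k : ℕ) → (Fin (k + 1) → Rn n) → Prop)

def TranslationInvariant : Prop :=
  ∀ (k : ℕ) (y : Fin (k + 1) → Rn n) (t : Zn n), Xp k y → Xp k fun a => y a + zToR t

variable {Xp}

lemma TranslationInvariant.iff (hinv : TranslationInvariant Xp) {k : ℕ} (y : Fin (k + 1) → Rn n)
    (t : Zn n) : (Xp k fun a => y a + zToR t) ↔ Xp k y :=
  ⟨fun h => by simpa [zToR_neg] using hinv k _ (-t) h, hinv k y t⟩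

lemma TranslationInvariant.vertex_iff (hinv : TranslationInvariant Xp) (p : Rn n) (t : Zn n) :
    Xp 0 ![p + zToR t] ↔ Xp 0 ![p] := by
  have e : (fun a => ![p] a + zToR t) = ![p + zToR t] := by ext a : 1; fin_cases a; rfl
  rw [← e, hinv.iff]

lemma TranslationInvariant.edge_iff (hinv : TranslationInvariant Xp) (p q : Rn n) (t : Zn n) :
    Xp 1 ![p + zToR t, q + zToR t] ↔ Xp 1 ![p, q] := by
  have e : (fun a => ![p, q] a + zToR t) = ![p + zToR t, q + zToR t] := by
    ext a : 1; fin_cases a <;> rfl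
  rw [← e, hinv.iff]

variable (Xp)

def vertices : Set (Torus n) := {v | ∃ p, Xp 0 ![p] ∧ toTorus p = v}

def vertexRep (v : vertices Xp) : Rn n := v.2.choose

lemma vertexRep_spec (v : vertices Xp) :
    Xp 0 ![vertexRep Xp v] ∧ toTorus (vertexRep Xp v) = v :=
  v.2.choose_spec

lemma injective_toTorus_comp_vertexRep : Function.Injective (toTorus ∘ vertexRep Xp) :=
  fun v w h => Subtype.ext <| by
    simpa only [Function.comp_apply, (vertexRep_spec Xp _).2] using h

lemma vertex_iff_exists_vertexRep (hinv : TranslationInvariant Xp) (p : Rn n) :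
    Xp 0 ![p] ↔ ∃ v t, p = vertexRep Xp v + zToR t := by
  constructor
  · intro hp
    let v : vertices Xp := ⟨toTorus p, p, hp, rfl⟩
    exact ⟨v, toTorus_eq_toTorus_iff.1 (vertexRep_spec Xp v).2⟩
  · rintro ⟨v, t, rfl⟩
    exact (hinv.vertex_iff _ t).2 (vertexRep_spec Xp v).1

lemma vertices_finite
    (hfin : Set.Finite {p : Torus n × (Fin 0 → Rn n) | ∃ y : Fin (0 + 1) → Rn n, Xp 0 y ∧
      p = (toTorus (y 0), fun a : Fin 0 => y a.succ - y 0)}) :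
    (vertices Xp).Finite :=
  (hfin.image Prod.fst).subset <| by
    rintro _ ⟨p, hp, rfl⟩
    exact ⟨_, ⟨![p], hp, rfl⟩, rfl⟩

def edgeExponents (v w : vertices Xp) : Set (Zn n) :=
  {m | Xp 1 ![vertexRep Xp w, vertexRep Xp v + zToR m]}

lemma edgeExponents_finite
    (hfin : Set.Finite {p : Torus n × (Fin 1 → Rn n) | ∃ y : Fin (1 + 1) → Rn n, Xp 1 y ∧
      p = (toTorus (y 0), fun a : Fin 1 => y a.succ - y 0)})
    (v w : vertices Xp) : (edgeExponents Xp v w).Finite := by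
  let f (m : Zn n) : Torus n × (Fin 1 → Rn n) :=
    let y := ![vertexRep Xp w, vertexRep Xp v + zToR m]
    (toTorus (y 0), fun a => y a.succ - y 0)
  refine Set.Finite.of_finite_image (f := f) (hfin.subset ?_) fun a _ b _ hab => ?_
  · rintro _ ⟨m, hm, rfl⟩
    exact ⟨_, hm, rfl⟩
  · have h := congrFun (congrArg Prod.snd hab) 0
    exact zToR_injective (by simpa [f] using h)

def DegreeOneEdge (vdeg : Torus n → ℤ) (p q : Rn n) : Prop :=
  Xp 0 ![p] ∧ Xp 0 ![q] ∧ Xp 1 ![p, q] ∧ vdeg (toTorus q) = vdeg (toTorus p) + 1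

lemma edge_iff_transGen_degreeOneEdge (vdeg : Torus n → ℤ)
    (h1 : ∀ p q : Rn n, Xp 1 ![p, q] ↔
      ∃ (k : ℕ) (c : Fin (k + 2) → Rn n), c 0 = p ∧ c (Fin.last (k + 1)) = q ∧
        (∀ a, Xp 0 ![c a]) ∧
        ∀ a : Fin (k + 1), Xp 1 ![c a.castSucc, c a.succ] ∧
          vdeg (toTorus (c a.succ)) = vdeg (toTorus (c a.castSucc)) + 1)
    (p q : Rn n) :
    Xp 1 ![p, q] ↔ TransGen (DegreeOneEdge Xp vdeg) p q := by
  rw [h1, Relation.transGen_iff_exists_fin]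
  refine exists_congr fun k => exists_congr fun c =>
    and_congr_right fun _ => and_congr_right fun _ => ⟨?_, fun h => ⟨?_, fun i => (h i).2.2⟩⟩
  · rintro ⟨hv, he⟩ i
    exact ⟨hv _, hv _, he i⟩
  · refine Fin.lastCases ?_ fun i => (h i).1
    simpa only [Fin.succ_last] using (h (Fin.last k)).2.1

variable [Fintype (vertices Xp)] [Nonempty (vertices Xp)]

def complexSeq (vdeg : Torus n → ℤ) (hE : ∀ v w, (edgeExponents Xp v w).Finite) : BasedSeq n :=
  BasedSeq.ofExponents (vertices Xp) (fun v => vdeg v) fun v w => (hE v w).toFinset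

lemma liftedStep_complexSeq (hinv : TranslationInvariant Xp) (vdeg : Torus n → ℤ)
    (hE : ∀ v w, (edgeExponents Xp v w).Finite) :
    (complexSeq Xp vdeg hE).LiftedStep (vertexRep Xp) = DegreeOneEdge Xp vdeg := by
  ext p q
  constructor
  · rintro ⟨v, w, s, m, rfl, rfl, hm⟩
    obtain ⟨hdeg, hm⟩ := BasedSeq.mem_support_ofExponents.1 hm
    replace hm : Xp 1 ![vertexRep Xp w, vertexRep Xp v + zToR m] := (hE v w).mem_toFinset.1 hm
    refine ⟨(hinv.vertex_iff _ _).2 (vertexRep_spec Xp w).1,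
      (hinv.vertex_iff _ _).2 (vertexRep_spec Xp v).1, ?_, ?_⟩
    · rw [← hinv.edge_iff _ _ s] at hm
      rwa [zToR_add, add_comm (zToR s), ← add_assoc]
    · rwa [toTorus_add_zToR, toTorus_add_zToR, (vertexRep_spec Xp v).2, (vertexRep_spec Xp w).2]
  · rintro ⟨hp, hq, hpq, hdeg⟩
    obtain ⟨w, s, rfl⟩ := (vertex_iff_exists_vertexRep Xp hinv p).1 hp
    obtain ⟨v, t, rfl⟩ := (vertex_iff_exists_vertexRep Xp hinv q).1 hq
    refine ⟨v, w, s, t - s, rfl, by rw [add_sub_cancel], BasedSeq.mem_support_ofExponents.2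
      ⟨?_, (hE v w).mem_toFinset.2 ?_⟩⟩
    · rwa [toTorus_add_zToR, toTorus_add_zToR, (vertexRep_spec Xp v).2,
        (vertexRep_spec Xp w).2] at hdeg
    · show Xp 1 ![vertexRep Xp w, vertexRep Xp v + zToR (t - s)]
      rw [← hinv.edge_iff _ _ s, add_assoc, ← zToR_add, sub_add_cancel]
      exact hpq

end DegreeComplex

theorem stmt5_general (n : ℕ)
    (Xp : (k : ℕ) → (Fin (k + 1) → Rn n) → Prop)
    (hinv : ∀ (k : ℕ) (y : Fin (k + 1) → Rn n) (t : Zn n),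
      Xp k y → Xp k fun a => y a + zToR t)
    (hfin : ∀ k : ℕ, Set.Finite {p : Torus n × (Fin k → Rn n) |
      ∃ y : Fin (k + 1) → Rn n, Xp k y ∧
        p = (toTorus (y 0), fun a : Fin k => y a.succ - y 0)})
    (hne : ∃ y : Fin 1 → Rn n, Xp 0 y)
    (vdeg : Torus n → ℤ)
    (h1 : ∀ p q : Rn n, Xp 1 ![p, q] ↔
      ∃ (k : ℕ) (c : Fin (k + 2) → Rn n), c 0 = p ∧ c (Fin.last (k + 1)) = q ∧
        (∀ a, Xp 0 ![c a]) ∧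
        ∀ a : Fin (k + 1), Xp 1 ![c a.castSucc, c a.succ] ∧
          vdeg (toTorus (c a.succ)) = vdeg (toTorus (c a.castSucc)) + 1)
    (h2 : ∀ (k : ℕ) (y : Fin (k + 3) → Rn n), Xp (k + 2) y ↔
      (∀ a, Xp 0 ![y a]) ∧
        ∀ a : Fin (k + 2), Xp 1 ![y a.castSucc, y a.succ]) :
    ∃ (F : BasedSeq n) (x : F.I → Rn n),
      (∀ i j : F.I, ∀ m ∈ (F.d i j).coeff.support, (F.d i j).coeff m = 1) ∧
        ∀ (k : ℕ) (y : Fin (k + 1) → Rn n), Xp k y ↔ InX F x k y := by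
  have := (vertices_finite Xp (hfin 0)).fintype
  have : Nonempty (vertices Xp) :=
    let ⟨y, hy⟩ := hne
    ⟨⟨toTorus (y 0), y 0, by rwa [← FinVec.etaExpand_eq y] at hy, rfl⟩⟩
  let F := complexSeq Xp vdeg (edgeExponents_finite Xp (hfin 1))
  have hx := injective_toTorus_comp_vertexRep Xp
  have hvert := vertex_iff_exists_vertexRep Xp hinv
  have hedge (p q : Rn n) : Xp 1 ![p, q] ↔ InX F (vertexRep Xp) 1 ![p, q] := by
    rw [edge_iff_transGen_degreeOneEdge Xp vdeg h1, F.inX_one_iff_transGen _ hx,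
      liftedStep_complexSeq Xp hinv]
  refine ⟨F, vertexRep Xp, fun i j m hm => BasedSeq.coeff_ofExponents_of_mem_support hm,
    fun k y => ?_⟩
  rcases k with _ | _ | k
  · rw [← FinVec.etaExpand_eq y]
    change Xp 0 ![y 0] ↔ InX F _ 0 ![y 0]
    rw [hvert, F.inX_iff_forall_vertex_and_edge _ hx]
    exact ⟨fun h => ⟨Fin.forall_fin_one.2 h, nofun⟩, fun h => h.1 0⟩
  · rw [← FinVec.etaExpand_eq y]
    exact hedge (y 0) (y 1)
  · rw [h2, F.inX_iff_forall_vertex_and_edge _ hx]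
    simp only [hvert, hedge]
    rfl

/-- a finite linear semi-simplicial complex over `T^n` admitting a degree
function satisfying conditions (1) and (2) is of the form `X(F^•)` for some bounded based
sequence `F^•` (which may be taken with all nonzero coefficients equal to `1`) and some
choice of points `x_i`. -/
theorem stmt5 (n : ℕ) (hn : 1 ≤ n)
    (Xp : (k : ℕ) → (Fin (k + 1) → Rn n) → Prop)
    (hinv : ∀ (k : ℕ) (y : Fin (k + 1) → Rn n) (t : Zn n),
      Xp k y → Xp k fun a => y a + zToR t)
    (hface : ∀ (k : ℕ) (y : Fin (k + 2) → Rn n), Xp (k + 1) y →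
      ∀ j : Fin (k + 2), Xp k fun a => y (j.succAbove a))
    (hfin : ∀ k : ℕ, Set.Finite {p : Torus n × (Fin k → Rn n) |
      ∃ y : Fin (k + 1) → Rn n, Xp k y ∧
        p = (toTorus (y 0), fun a : Fin k => y a.succ - y 0)})
    (hbdd : ∃ K : ℕ, ∀ k : ℕ, K ≤ k → ∀ y : Fin (k + 1) → Rn n, ¬ Xp k y)
    (hne : ∃ y : Fin 1 → Rn n, Xp 0 y)
    (vdeg : Torus n → ℤ)
    (h1 : ∀ p q : Rn n, Xp 1 ![p, q] ↔
      ∃ (k : ℕ) (c : Fin (k + 2) → Rn n), c 0 = p ∧ c (Fin.last (k + 1)) = q ∧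
        (∀ a, Xp 0 ![c a]) ∧
        ∀ a : Fin (k + 1), Xp 1 ![c a.castSucc, c a.succ] ∧
          vdeg (toTorus (c a.succ)) = vdeg (toTorus (c a.castSucc)) + 1)
    (h2 : ∀ (k : ℕ) (y : Fin (k + 3) → Rn n), Xp (k + 2) y ↔
      (∀ a, Xp 0 ![y a]) ∧
        ∀ a : Fin (k + 2), Xp 1 ![y a.castSucc, y a.succ]) :
    ∃ (F : BasedSeq n) (x : F.I → Rn n),
      (∀ i j : F.I, ∀ m ∈ (F.d i j).coeff.support, (F.d i j).coeff m = 1) ∧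
        ∀ (k : ℕ) (y : Fin (k + 1) → Rn n), Xp k y ↔ InX F x k y :=
  stmt5_general n Xp hinv hfin hne vdeg h1 h2

end
end

section
/- Let f(x_0, x) = x_0·√(1 − ‖x‖²), let φ_b : ℝ × D^{n−1} → ℝ^n be the base component of φ, φ_b(x_0, x) = (x_0, x_0·x), and let ξ : ℝ × D^{n−1} → ℝ^n be the fiber component, ξ(x_0, x) = (1, −x)/√(1 − ‖x‖²). Then for every p ∈ ℝ × D^{n−1} and every tangent vector v ∈ ℝ × ℝ^{n−1}, the Fréchet derivative of f satisfies Df(p)(v) = ⟨ξ(p), Dφ_b(p)(v)⟩, where ⟨·,·⟩ is the standard inner product on ℝ^n. (Equivalently: the pullback under φ of the Liouville one-form λ = Σ_i ξ_i dy_i on T*ℝ^n equals df, so φ is an exact Lagrangian embedding with primitive f.) -/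
noncomputable section

open scoped RealInnerProductSpace

/-- `ℝ^{n-1}` with the Euclidean norm. -/
abbrev EucV (n : ℕ) : Type := EuclideanSpace ℝ (Fin (n - 1))

/-- The domain `ℝ × D^{n-1}`, where `D^{n-1}` is the open unit disk. -/
def diskDom (n : ℕ) : Set (ℝ × EucV n) := {p | ‖p.2‖ < 1}

/-- The map `φ : ℝ × D^{n-1} → T^*ℝ^n = ℝ^n × ℝ^n`, with `ℝ^n = ℝ × ℝ^{n-1}`:
base components `(x_0, x_0·x)` and fiber components `(1, -x)/√(1 - ‖x‖²)`. -/
def phiMap (n : ℕ) : ℝ × EucV n → (ℝ × EucV n) × (ℝ × EucV n) := fun p =>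
  ((p.1, p.1 • p.2),
    ((Real.sqrt (1 - ‖p.2‖ ^ 2))⁻¹, -((Real.sqrt (1 - ‖p.2‖ ^ 2))⁻¹) • p.2))

/-- `f(x_0, x) = x_0·√(1 - ‖x‖²)`. -/
def fPrim (n : ℕ) : ℝ × EucV n → ℝ := fun p => p.1 * Real.sqrt (1 - ‖p.2‖ ^ 2)

/-- The base component `φ_b(x_0, x) = (x_0, x_0·x)`. -/
def phiBase (n : ℕ) : ℝ × EucV n → ℝ × EucV n := fun p => (p.1, p.1 • p.2)

/-- The fiber component `ξ(x_0, x) = (1, -x)/√(1 - ‖x‖²)`. -/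
def xiMap (n : ℕ) : ℝ × EucV n → ℝ × EucV n := fun p =>
  ((Real.sqrt (1 - ‖p.2‖ ^ 2))⁻¹, -((Real.sqrt (1 - ‖p.2‖ ^ 2))⁻¹) • p.2)

/-- The standard inner product on `ℝ^n = ℝ × ℝ^{n-1}`. -/
def innerRn (n : ℕ) (a b : ℝ × EucV n) : ℝ := a.1 * b.1 + ⟪a.2, b.2⟫

/-- `Df(p)(v) = ⟨ξ(p), Dφ_b(p)(v)⟩`, i.e. `φ^*(λ) = df`: `φ` is an exact
Lagrangian embedding with primitive `f`. -/
theorem stmt15 (n : ℕ) (hn : 2 ≤ n) :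
    ∀ p ∈ diskDom n, ∀ v : ℝ × EucV n,
      fderiv ℝ (fPrim n) p v = innerRn n (xiMap n p) (fderiv ℝ (phiBase n) p v) := by
  rintro ⟨x0, x⟩ hp v
  have hx : ‖x‖ < 1 := hp
  have hpos : (0:ℝ) < 1 - ‖x‖ ^ 2 := by nlinarith [norm_nonneg x]
  set s := Real.sqrt (1 - ‖x‖ ^ 2) with hs_def
  have hs : 0 < s := Real.sqrt_pos.mpr hpos
  have hs2 : s ^ 2 = 1 - ‖x‖ ^ 2 := Real.sq_sqrt hpos.le
  have h1 : HasFDerivAt (fun p : ℝ × EucV n => p.1)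
      (ContinuousLinearMap.fst ℝ ℝ (EucV n)) ((x0, x) : ℝ × EucV n) := hasFDerivAt_fst
  have h2 : HasFDerivAt (fun p : ℝ × EucV n => p.2)
      (ContinuousLinearMap.snd ℝ ℝ (EucV n)) ((x0, x) : ℝ × EucV n) := hasFDerivAt_snd
  have hB := h1.prodMk (h1.smul h2)
  have hin := h2.inner (𝕜 := ℝ) h2
  have heq : (fun p : ℝ × EucV n => ⟪p.2, p.2⟫) = fun p : ℝ × EucV n => ‖p.2‖ ^ 2 := by
    funext p; exact real_inner_self_eq_norm_sq p.2
  rw [heq] at hin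
  have hq := hin.const_sub 1
  have hsq := (Real.hasDerivAt_sqrt (ne_of_gt hpos)).comp_hasFDerivAt ((x0, x) : ℝ × EucV n) hq
  have hF : HasFDerivAt (fPrim n) _ ((x0, x) : ℝ × EucV n) := h1.mul hsq
  have hB' : HasFDerivAt (phiBase n) _ ((x0, x) : ℝ × EucV n) := hB
  rw [hF.fderiv, hB'.fderiv]
  simp only [innerRn, xiMap, ContinuousLinearMap.add_apply, ContinuousLinearMap.smul_apply,
    ContinuousLinearMap.comp_apply, ContinuousLinearMap.prod_apply, ContinuousLinearMap.coe_fst',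
    ContinuousLinearMap.coe_snd', ContinuousLinearMap.neg_apply, fderivInnerCLM_apply,
    ContinuousLinearMap.smulRight_apply, smul_eq_mul, neg_smul, inner_neg_left,
    inner_smul_left, inner_add_right, inner_smul_right, real_inner_self_eq_norm_sq,
    RCLike.conj_to_real, conj_trivial]
  have hcomm : ⟪v.2, x⟫ = ⟪x, v.2⟫ := real_inner_comm _ _
  rw [hcomm]
  have hsne : s ≠ 0 := ne_of_gt hs
  rw [← hs_def]
  have hN : ‖x‖ ^ 2 = 1 - s ^ 2 := by linarith
  rw [hN]
  field_simp
  ring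

end
end
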